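/- arXiv:2401.02074 — 5 statements merged into one kernel-verified Lean document; each statement's English description precedes it below -/
import Mathlib

section
/- If λ₁, λ₂, λ₃ are complex numbers, all distinct from 1, satisfying 1/(1-λ₁) + 1/(1-λ₂) + 1/(1-λ₃) = 1, and |λ₁| < 1 and |λ₂| < 1, then Re(λ₃) > 1. -/
/-! The map `z ↦ 1 / (1 - z)` sends the open unit disc into the half-plane `Re w > 1/2`, since
`2 Re (1 - z) - |1 - z|² = 1 - |z|²`. Hence the first two terms of the relation have real parts
summing to more than `1`, so `Re (1 / (1 - λ₃)) < 0`; as `Re w⁻¹` has the sign of `Re w`, this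
means `Re (1 - λ₃) < 0`. -/

namespace Complex

theorem re_neg_of_inv_re_neg {w : ℂ} (h : w⁻¹.re < 0) : w.re < 0 := by
  rw [inv_re] at h
  exact (div_neg_iff.mp h).elim (fun h' => absurd h'.2 (normSq_nonneg w).not_gt) And.left

theorem half_lt_inv_one_sub_re {z : ℂ} (hz : ‖z‖ < 1) : 1 / 2 < (1 - z)⁻¹.re := by
  have hz1 : z ≠ 1 := by rintro rfl; simp at hz
  have hpos : 0 < normSq (1 - z) := normSq_pos.mpr (sub_ne_zero.mpr hz1.symm)
  have hsq : normSq z < 1 := by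
    rw [← Complex.sq_norm]; nlinarith [norm_nonneg z]
  have hexpand : normSq (1 - z) = 1 - 2 * z.re + normSq z := by
    simp only [normSq_apply, sub_re, sub_im, one_re, one_im]; ring
  rw [inv_re, lt_div_iff₀ hpos, sub_re, one_re, hexpand]
  linarith

end Complex

theorem stmt_0_general (l1 l2 l3 : ℂ)
    (heq : 1 / (1 - l1) + 1 / (1 - l2) + 1 / (1 - l3) = 1)
    (ha1 : ‖l1‖ < 1) (ha2 : ‖l2‖ < 1) :
    1 < l3.re := by
  simp only [one_div] at heq
  have hre : (1 - l1)⁻¹.re + (1 - l2)⁻¹.re + (1 - l3)⁻¹.re = 1 := by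
    simpa using congrArg Complex.re heq
  have hneg : (1 - l3)⁻¹.re < 0 := by
    linarith [Complex.half_lt_inv_one_sub_re ha1, Complex.half_lt_inv_one_sub_re ha2]
  have := Complex.re_neg_of_inv_re_neg hneg
  rw [Complex.sub_re, Complex.one_re] at this
  linarith

theorem stmt_0 (l1 l2 l3 : ℂ) (h1 : l1 ≠ 1) (h2 : l2 ≠ 1) (h3 : l3 ≠ 1)
    (heq : 1 / (1 - l1) + 1 / (1 - l2) + 1 / (1 - l3) = 1)
    (ha1 : ‖l1‖ < 1) (ha2 : ‖l2‖ < 1) :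
    1 < l3.re :=
  stmt_0_general l1 l2 l3 heq ha1 ha2
end

section
/- The map (ω₁, ω₂) ↦ 1 - ω₁ω₂/(ω₁ + ω₂) from {ω : Re ω < 0} × {ω : Re ω < 0} to {λ : Re λ > 1} is well-defined and surjective; that is, for every λ ∈ ℂ with Re(λ) > 1 there exist ω₁, ω₂ with Re(ω₁) < 0, Re(ω₂) < 0 and 1/(1-λ) = 1/ω₁ + 1/ω₂. -/
theorem stmt_5 :
    (∀ ω₁ ω₂ : ℂ, ω₁.re < 0 → ω₂.re < 0 →
      ω₁ + ω₂ ≠ 0 ∧ 1 < (1 - ω₁ * ω₂ / (ω₁ + ω₂)).re) ∧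
    (∀ lam : ℂ, 1 < lam.re →
      ∃ ω₁ ω₂ : ℂ, ω₁.re < 0 ∧ ω₂.re < 0 ∧
        1 / (1 - lam) = 1 / ω₁ + 1 / ω₂) := by
  constructor
  · intro ω₁ ω₂ h₁ h₂
    have hsum : (ω₁ + ω₂).re < 0 := by simp [Complex.add_re]; linarith
    have hne : ω₁ + ω₂ ≠ 0 := fun h => by simp [h] at hsum
    refine ⟨hne, ?_⟩
    have hns : 0 < Complex.normSq (ω₁ + ω₂) := Complex.normSq_pos.2 hne
    have h1 : ω₁ ≠ 0 := fun h => by simp [h] at h₁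
    have h2 : ω₂ ≠ 0 := fun h => by simp [h] at h₂
    have hn1 : 0 < Complex.normSq ω₁ := Complex.normSq_pos.2 h1
    have hn2 : 0 < Complex.normSq ω₂ := Complex.normSq_pos.2 h2
    have key : (ω₁ * ω₂ / (ω₁ + ω₂)).re < 0 := by
      rw [Complex.div_re]
      have hnum : (ω₁ * ω₂).re * (ω₁ + ω₂).re + (ω₁ * ω₂).im * (ω₁ + ω₂).im
          = ω₂.re * Complex.normSq ω₁ + ω₁.re * Complex.normSq ω₂ := by
        simp [Complex.mul_re, Complex.mul_im, Complex.add_re, Complex.add_im,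
          Complex.normSq_apply]
        ring
      have : (ω₁ * ω₂).re * (ω₁ + ω₂).re + (ω₁ * ω₂).im * (ω₁ + ω₂).im < 0 := by
        rw [hnum]; nlinarith
      have := div_neg_of_neg_of_pos this hns
      calc (ω₁ * ω₂).re * (ω₁ + ω₂).re / Complex.normSq (ω₁ + ω₂) +
            (ω₁ * ω₂).im * (ω₁ + ω₂).im / Complex.normSq (ω₁ + ω₂)
          = ((ω₁ * ω₂).re * (ω₁ + ω₂).re + (ω₁ * ω₂).im * (ω₁ + ω₂).im) /
            Complex.normSq (ω₁ + ω₂) := by ring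
        _ < 0 := this
    simp [Complex.sub_re]
    linarith
  · intro lam hlam
    have hne : (1 : ℂ) - lam ≠ 0 := by
      intro h
      have : (1 - lam).re = 0 := by rw [h]; simp
      simp [Complex.sub_re] at this
      linarith
    refine ⟨2 * (1 - lam), 2 * (1 - lam), ?_, ?_, ?_⟩
    · simp [Complex.mul_re, Complex.sub_re]; linarith
    · simp [Complex.mul_re, Complex.sub_re]; linarith
    · field_simp
      ring
end

section
/- For g_B(z) = z + B + 1/z with |B| > 3: if |z| > 1 and Re(z/B) > 0, then |g_B(z)| > 2|B|/3 > 1 and Re(g_B(z)/B) > 2/3. -/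
/-!
Write `g_B(z) / B = z / B + 1 + 1 / (z B)`. The last term has modulus `< 1/3` because
`|z| > 1` and `|B| > 3`, so `Re (g_B(z) / B) > 0 + 1 - 1/3`; then
`|g_B(z)| = |B| |g_B(z) / B| ≥ |B| Re (g_B(z) / B)`.
-/

namespace Complex

lemma norm_one_div_mul_lt {z B : ℂ} {a b : ℝ} (ha : 0 < a) (hb : 0 < b)
    (hz : a < ‖z‖) (hB : b < ‖B‖) : ‖1 / (z * B)‖ < 1 / (a * b) := by
  rw [norm_div, norm_one, norm_mul]
  gcongr

lemma sub_lt_re_add_one_add {w e : ℂ} {ε : ℝ} (hw : 0 < w.re) (he : ‖e‖ < ε) :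
    1 - ε < (w + 1 + e).re := by
  have : -‖e‖ ≤ e.re := neg_le_of_abs_le (abs_re_le_norm e)
  simp only [add_re, one_re]
  linarith

lemma mul_norm_lt_norm_of_lt_re_div {u B : ℂ} {c : ℝ} (hB : B ≠ 0) (hc : c < (u / B).re) :
    c * ‖B‖ < ‖u‖ := by
  calc c * ‖B‖ < (u / B).re * ‖B‖ := by gcongr
    _ ≤ ‖u / B‖ * ‖B‖ := by gcongr; exact re_le_norm _
    _ = ‖u‖ := by rw [norm_div, div_mul_cancel₀ _ (norm_ne_zero_iff.mpr hB)]

end Complex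

theorem stmt_8 (B z : ℂ) (hB : 3 < ‖B‖) (hz : 1 < ‖z‖)
    (hre : 0 < (z / B).re) :
    2 * ‖B‖ / 3 < ‖z + B + 1 / z‖ ∧
      1 < 2 * ‖B‖ / 3 ∧
      2 / 3 < ((z + B + 1 / z) / B).re := by
  have hB0 : B ≠ 0 := norm_pos_iff.mp (by linarith)
  have hz0 : z ≠ 0 := norm_pos_iff.mp (by linarith)
  have hsplit : (z + B + 1 / z) / B = z / B + 1 + 1 / (z * B) := by field_simp
  have hsmall : ‖1 / (z * B)‖ < 1 / (1 * 3) :=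
    Complex.norm_one_div_mul_lt one_pos three_pos hz hB
  have hre_g : 2 / 3 < ((z + B + 1 / z) / B).re := by
    rw [hsplit]
    linarith [Complex.sub_lt_re_add_one_add hre hsmall]
  have hnorm := Complex.mul_norm_lt_norm_of_lt_re_div hB0 hre_g
  exact ⟨by linarith, by linarith, hre_g⟩
end

section
/- For g_B(z) = z + B + 1/z with |B| > 3: if |z| > 1 and Re(z/B) > 0, then for all n ≥ 1 the iterate g_B^n(z) is well-defined (never hits 0), satisfies |g_B^n(z)| > 1 and Re(g_B^n(z)/B) > 0, and moreover Re(g_B^n(z)/B) > 2n/3, so |g_B^n(z)| → ∞ as n → ∞. -/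
/-!
Divide by `B`: with `u = w / B`, one step of `g_B` sends `u` to `u + 1 + 1 / (w B)`, and
`‖1 / (w B)‖ < 1 / 3` as soon as `‖w‖ > 1`. So each step raises `Re (w / B)` by more than `2 / 3`,
which keeps `Re (w / B)` positive, and then `‖w‖ ≥ ‖B‖ Re (w / B) > 3 · (2 / 3)` keeps `‖w‖ > 1`.
-/

open Filter

noncomputable def joukowskiShift (B w : ℂ) : ℂ := w + B + 1 / w

def escapeRegion (B : ℂ) : Set ℂ := {w | 1 < ‖w‖ ∧ 0 < (w / B).re}

lemma Complex.norm_mul_re_div_le (u B : ℂ) : ‖B‖ * (u / B).re ≤ ‖u‖ := by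
  rcases eq_or_ne B 0 with rfl | hB
  · simp
  calc ‖B‖ * (u / B).re ≤ ‖B‖ * ‖u / B‖ := by gcongr; exact Complex.re_le_norm _
    _ = ‖u‖ := by rw [norm_div, mul_div_cancel₀ _ (norm_ne_zero_iff.mpr hB)]

lemma re_div_add_two_thirds_lt_re_joukowskiShift_div {B w : ℂ} (hB : 3 < ‖B‖) (hw : 1 ≤ ‖w‖) :
    (w / B).re + 2 / 3 < (joukowskiShift B w / B).re := by
  have hw0 : w ≠ 0 := norm_pos_iff.mp (by linarith)
  have hB0 : B ≠ 0 := norm_pos_iff.mp (by linarith)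
  have hsplit : joukowskiShift B w / B = w / B + 1 + 1 / (w * B) := by
    unfold joukowskiShift; field_simp
  have hsmall : ‖1 / (w * B)‖ < 1 / 3 := by
    rw [one_div, norm_inv, norm_mul, inv_lt_comm₀ (by positivity) (by norm_num)]
    nlinarith
  have hre : -(1 / 3) < (1 / (w * B)).re := by
    linarith [neg_abs_le (1 / (w * B)).re, Complex.abs_re_le_norm (1 / (w * B))]
  rw [hsplit, Complex.add_re, Complex.add_re, Complex.one_re]
  linarith

lemma mapsTo_joukowskiShift_escapeRegion {B : ℂ} (hB : 3 < ‖B‖) :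
    Set.MapsTo (joukowskiShift B) (escapeRegion B) (escapeRegion B) := by
  rintro w ⟨hw, hre⟩
  have hstep := re_div_add_two_thirds_lt_re_joukowskiShift_div hB hw.le
  refine ⟨?_, by linarith⟩
  nlinarith [Complex.norm_mul_re_div_le (joukowskiShift B w) B]

lemma re_div_add_le_re_iterate_joukowskiShift_div {B z : ℂ} (hB : 3 < ‖B‖)
    (hz : z ∈ escapeRegion B) (n : ℕ) :
    (z / B).re + 2 * n / 3 ≤ ((joukowskiShift B)^[n] z / B).re := by
  induction n with
  | zero => simp
  | succ n ih =>
    have hmem := (mapsTo_joukowskiShift_escapeRegion hB).iterate n hz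
    have hstep := re_div_add_two_thirds_lt_re_joukowskiShift_div hB hmem.1.le
    rw [Function.iterate_succ_apply']
    push_cast
    linarith

theorem stmt_9 (B z : ℂ) (hB : 3 < ‖B‖) (hz : 1 < ‖z‖)
    (hre : 0 < (z / B).re) :
    (∀ n : ℕ, 1 ≤ n →
        (fun w : ℂ => w + B + 1 / w)^[n] z ≠ 0 ∧
        1 < ‖(fun w : ℂ => w + B + 1 / w)^[n] z‖ ∧
        0 < (((fun w : ℂ => w + B + 1 / w)^[n] z) / B).re ∧
        2 * n / 3 < (((fun w : ℂ => w + B + 1 / w)^[n] z) / B).re) ∧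
      Tendsto (fun n : ℕ => ‖(fun w : ℂ => w + B + 1 / w)^[n] z‖)
        atTop atTop := by
  rw [show (fun w : ℂ => w + B + 1 / w) = joukowskiShift B from rfl]
  have hzB : z ∈ escapeRegion B := ⟨hz, hre⟩
  have hmem n := (mapsTo_joukowskiShift_escapeRegion hB).iterate n hzB
  have hgrowth n := re_div_add_le_re_iterate_joukowskiShift_div hB hzB n
  refine ⟨fun n _ => ⟨norm_pos_iff.mp (by linarith [(hmem n).1]), (hmem n).1, (hmem n).2,
    by linarith [hgrowth n]⟩, ?_⟩
  have hre_tendsto : Tendsto (fun n : ℕ => ((joukowskiShift B)^[n] z / B).re) atTop atTop :=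
    tendsto_atTop_mono (fun n => by linarith [hgrowth n])
      ((tendsto_natCast_atTop_atTop.const_mul_atTop two_pos).atTop_div_const three_pos)
  exact tendsto_atTop_mono (fun n => Complex.norm_mul_re_div_le _ B)
    (hre_tendsto.const_mul_atTop (by linarith))
end

section
/- For g_B(z) = z + B + 1/z with |B| > 3: the orbits of both critical points ±1 under iteration of g_B tend to infinity; i.e., |g_B^n(1)| → ∞ and |g_B^n(-1)| → ∞ as n → ∞. -/
/-!
Write `f z = z + B + 1/z` and `u z = Re (z * conj B)`, the component of `z` in the direction of `B`
scaled by `‖B‖`. Where `‖z‖ ≥ 1` the term `1/z` is a perturbation of size at most `1`, so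
`u (f z) ≥ u z + ‖B‖² - ‖B‖`. On the region `‖z‖ ≥ 1, u z ≥ -‖B‖`, which contains `±1`, this also
gives `‖z + B‖ ≥ ‖B‖ - 1`, hence `‖f z‖ ≥ ‖B‖ - 2 ≥ 1`: the region is invariant once `‖B‖ ≥ 3`.
Along an orbit in it `u` grows linearly, and `‖z‖ ≥ u z / ‖B‖`.
-/

open Filter Set ComplexConjugate

namespace Complex

lemma neg_norm_le_re_mul_conj_of_norm_eq_one {z : ℂ} (hz : ‖z‖ = 1) (B : ℂ) :
    -‖B‖ ≤ (z * conj B).re := by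
  have h := abs_re_le_norm (z * conj B)
  rw [norm_mul, norm_conj, hz, one_mul] at h
  exact (abs_le.mp h).1

lemma re_mul_conj_add_norm_sq_sub_norm_le (B : ℂ) {z : ℂ} (hz : 1 ≤ ‖z‖) :
    (z * conj B).re + ‖B‖ ^ 2 - ‖B‖ ≤ ((z + B + 1 / z) * conj B).re := by
  have hinv : ‖1 / z * conj B‖ ≤ ‖B‖ := by
    rw [norm_mul, norm_conj, norm_div, norm_one]
    exact mul_le_of_le_one_left (norm_nonneg B) ((div_le_one (by linarith)).mpr hz)
  have hBB : (B * conj B).re = ‖B‖ ^ 2 := by rw [mul_conj, Complex.sq_norm, ofReal_re]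
  have hlow := (abs_le.mp ((abs_re_le_norm _).trans hinv)).1
  simp only [add_mul, add_re, hBB]
  linarith

lemma norm_sub_one_le_norm_add {z B : ℂ} (hz : 1 ≤ ‖z‖) (hre : -‖B‖ ≤ (z * conj B).re) :
    ‖B‖ - 1 ≤ ‖z + B‖ := by
  have hsq : ‖z + B‖ ^ 2 = ‖z‖ ^ 2 + ‖B‖ ^ 2 + 2 * (z * conj B).re := by
    simp only [Complex.sq_norm, normSq_add]
  apply abs_le_of_sq_le_sq' _ (norm_nonneg _) |>.2
  nlinarith

lemma tendsto_norm_atTop_of_tendsto_re_mul_conj {ι : Type*} {l : Filter ι} {w : ι → ℂ} {B : ℂ}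
    (hB : B ≠ 0) (h : Tendsto (fun i => (w i * conj B).re) l atTop) :
    Tendsto (fun i => ‖w i‖) l atTop := by
  rw [← tendsto_mul_const_atTop_of_pos (norm_pos_iff.mpr hB)]
  refine tendsto_atTop_mono (fun i => ?_) h
  simpa only [norm_mul, norm_conj] using re_le_norm (w i * conj B)

end Complex

open Complex

namespace ShiftedJoukowski

variable (B : ℂ)

def escapeRegion : Set ℂ := {z | 1 ≤ ‖z‖ ∧ -‖B‖ ≤ (z * conj B).re}

lemma mem_escapeRegion_of_norm_eq_one {z : ℂ} (hz : ‖z‖ = 1) : z ∈ escapeRegion B :=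
  ⟨hz.ge, neg_norm_le_re_mul_conj_of_norm_eq_one hz B⟩

lemma mapsTo_escapeRegion (hB : 3 ≤ ‖B‖) :
    MapsTo (fun w : ℂ => w + B + 1 / w) (escapeRegion B) (escapeRegion B) := by
  rintro z ⟨hz, hre⟩
  have hinv : ‖1 / z‖ ≤ 1 := by
    rw [norm_div, norm_one]
    exact (div_le_one (by linarith)).mpr hz
  have hadd := norm_sub_one_le_norm_add hz hre
  have htri := norm_sub_norm_le (z + B) (-(1 / z))
  rw [sub_neg_eq_add, norm_neg] at htri
  have hgrow := re_mul_conj_add_norm_sq_sub_norm_le B hz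
  exact ⟨by linarith, by nlinarith⟩

lemma add_mul_le_re_iterate_mul_conj (hB : 3 ≤ ‖B‖) {z : ℂ} (hz : z ∈ escapeRegion B) (n : ℕ) :
    (z * conj B).re + n * (‖B‖ ^ 2 - ‖B‖) ≤
      ((fun w : ℂ => w + B + 1 / w)^[n] z * conj B).re := by
  induction n with
  | zero => simp
  | succ n ih =>
    rw [Function.iterate_succ_apply']
    have hstep :=
      re_mul_conj_add_norm_sq_sub_norm_le B ((mapsTo_escapeRegion B hB).iterate n hz).1
    push_cast
    linarith

lemma tendsto_norm_iterate_atTop (hB : 3 ≤ ‖B‖) {z : ℂ} (hz : z ∈ escapeRegion B) :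
    Tendsto (fun n : ℕ => ‖(fun w : ℂ => w + B + 1 / w)^[n] z‖) atTop atTop := by
  have hB0 : B ≠ 0 := norm_pos_iff.mp (by linarith)
  have hrate : 0 < ‖B‖ ^ 2 - ‖B‖ := by nlinarith
  refine tendsto_norm_atTop_of_tendsto_re_mul_conj hB0 (tendsto_atTop_mono
    (add_mul_le_re_iterate_mul_conj B hB hz) ?_)
  exact tendsto_atTop_add_const_left _ _ (tendsto_natCast_atTop_atTop.atTop_mul_const hrate)

end ShiftedJoukowski

open ShiftedJoukowski

open Filter in
theorem stmt_11 (B : ℂ) (hB : 3 < ‖B‖) :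
    Tendsto (fun n : ℕ => ‖(fun w : ℂ => w + B + 1 / w)^[n] 1‖)
        atTop atTop ∧
      Tendsto (fun n : ℕ => ‖(fun w : ℂ => w + B + 1 / w)^[n] (-1)‖)
        atTop atTop :=
  ⟨tendsto_norm_iterate_atTop B hB.le (mem_escapeRegion_of_norm_eq_one B (by simp)),
    tendsto_norm_iterate_atTop B hB.le (mem_escapeRegion_of_norm_eq_one B (by simp))⟩
end
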